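/- Let X ⊆ ℝⁿ, x⋆ ∈ X, ν ≥ 0, and d : ℝⁿ × ℝⁿ → ℝ a metric. Define the augmented suboptimality loss ℓ_ASL(ĉ) = sup_{x ∈ X}(ν d(x, x⋆) − ĉᵀx) + ĉᵀx⋆. Then ℓ_ASL is convex in ĉ, nonnegative, and if ℓ_ASL(ĉ) = 0 with ν > 0, then x⋆ is the unique minimizer of x ↦ ĉᵀx over X. -/

import Mathlib

/-!
Each `x ∈ X` contributes to the supremum a function of `ĉ` that is affine, so the supremum is
convex. The contribution of `x = x⋆` is `0`, which makes the loss nonnegative. If the loss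
vanishes, the contribution of every other `x` is at most `0`, i.e.
`ĉᵀx⋆ + ν d(x, x⋆) ≤ ĉᵀx`, and `ν d(x, x⋆) > 0`.
-/

namespace EReal

variable {ι : Type*} {t : ℝ}

lemma iSup_coe_convexComb_le (f g : ι → ℝ) (ht₀ : 0 ≤ t) (ht₁ : t ≤ 1) :
    ⨆ i, ((t * f i + (1 - t) * g i : ℝ) : EReal) ≤
      t * (⨆ i, (f i : EReal)) + ((1 - t : ℝ) : EReal) * ⨆ i, (g i : EReal) :=
  iSup_le fun i => by
    rw [coe_add, coe_mul, coe_mul]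
    exact add_le_add
      (mul_le_mul_of_nonneg_left (le_iSup (fun i => (f i : EReal)) i) (EReal.coe_nonneg.2 ht₀))
      (mul_le_mul_of_nonneg_left (le_iSup (fun i => (g i : EReal)) i)
        (EReal.coe_nonneg.2 (_root_.sub_nonneg.2 ht₁)))

lemma iSup_coe_add_coe_convexComb_le (f g : ι → ℝ) (a b : ℝ) (ht₀ : 0 ≤ t) (ht₁ : t ≤ 1) :
    (⨆ i, ((t * f i + (1 - t) * g i : ℝ) : EReal)) + ((t * a + (1 - t) * b : ℝ) : EReal) ≤
      t * ((⨆ i, (f i : EReal)) + a) + ((1 - t : ℝ) : EReal) * ((⨆ i, (g i : EReal)) + b) := by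
  rw [left_distrib_of_nonneg_of_ne_top (EReal.coe_nonneg.2 ht₀) (coe_ne_top _),
    left_distrib_of_nonneg_of_ne_top (EReal.coe_nonneg.2 (_root_.sub_nonneg.2 ht₁)) (coe_ne_top _),
    add_add_add_comm, coe_add, coe_mul, coe_mul]
  exact add_le_add (iSup_coe_convexComb_le f g ht₀ ht₁) le_rfl

end EReal

theorem stmt_13_general (n : ℕ) (X : Set (Fin n → ℝ))
    (xstar : Fin n → ℝ) (hxstar : xstar ∈ X)
    (d : (Fin n → ℝ) → (Fin n → ℝ) → ℝ)
    (hd_nonneg : ∀ x y, 0 ≤ d x y)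
    (hd_eq : ∀ x y, d x y = 0 ↔ x = y)
    (ν : ℝ)
    (ℓ : (Fin n → ℝ) → EReal)
    (hℓ : ∀ c, ℓ c =
      (⨆ x : X, ((ν * d x xstar - ∑ i, c i * (x : Fin n → ℝ) i : ℝ) : EReal)) +
        ((∑ i, c i * xstar i : ℝ) : EReal)) :
    (∀ c₁ c₂ : Fin n → ℝ, ∀ t : ℝ, 0 ≤ t → t ≤ 1 →
      ℓ (t • c₁ + (1 - t) • c₂) ≤ (t : EReal) * ℓ c₁ + ((1 - t : ℝ) : EReal) * ℓ c₂) ∧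
    (∀ c, 0 ≤ ℓ c) ∧
    (∀ c, 0 < ν → ℓ c = 0 →
      ∀ x ∈ X, x ≠ xstar → ∑ i, c i * xstar i < ∑ i, c i * x i) := by
  have term_le_loss : ∀ c, ∀ x ∈ X,
      ((ν * d x xstar - ∑ i, c i * x i + ∑ i, c i * xstar i : ℝ) : EReal) ≤ ℓ c := by
    intro c x hx
    rw [hℓ, EReal.coe_add]
    exact add_le_add (le_iSup
      (fun x : X => ((ν * d x xstar - ∑ i, c i * (x : Fin n → ℝ) i : ℝ) : EReal)) ⟨x, hx⟩) le_rfl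
  refine ⟨fun c₁ c₂ t ht₀ ht₁ => ?_, fun c => ?_, fun c hν hc x hx hne => ?_⟩
  · have combo_dot : ∀ x : Fin n → ℝ, ∑ i, (t • c₁ + (1 - t) • c₂) i * x i =
        t * ∑ i, c₁ i * x i + (1 - t) * ∑ i, c₂ i * x i := fun x =>
      (add_dotProduct _ _ x).trans (by rw [smul_dotProduct, smul_dotProduct]; rfl)
    simp_rw [hℓ, combo_dot]
    convert EReal.iSup_coe_add_coe_convexComb_le
      (fun x : X => ν * d x xstar - ∑ i, c₁ i * (x : Fin n → ℝ) i)
      (fun x : X => ν * d x xstar - ∑ i, c₂ i * (x : Fin n → ℝ) i) _ _ ht₀ ht₁ using 5 with x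
    ring
  · simpa [(hd_eq _ _).2 rfl] using term_le_loss c xstar hxstar
  · have hd : 0 < d x xstar := (hd_nonneg x xstar).lt_of_ne' fun h => hne ((hd_eq x xstar).1 h)
    have key := term_le_loss c x hx
    rw [hc, EReal.coe_nonpos] at key
    linarith [mul_pos hν hd]

/-- The augmented suboptimality loss `ℓ_ASL(ĉ) = sup_{x ∈ X}(ν d(x,x⋆) − ĉᵀx) + ĉᵀx⋆`
is convex and nonnegative, and if it vanishes with `ν > 0` then `x⋆` is the
unique minimizer of `x ↦ ĉᵀx` over `X`. -/
theorem stmt_13 (n : ℕ) (X : Set (Fin n → ℝ)) (hX : X.Nonempty)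
    (hXbdd : Bornology.IsBounded X)
    (xstar : Fin n → ℝ) (hxstar : xstar ∈ X)
    (d : (Fin n → ℝ) → (Fin n → ℝ) → ℝ)
    (hd_nonneg : ∀ x y, 0 ≤ d x y)
    (hd_eq : ∀ x y, d x y = 0 ↔ x = y)
    (hd_symm : ∀ x y, d x y = d y x)
    (hd_tri : ∀ x y z, d x z ≤ d x y + d y z)
    (ν : ℝ) (hν : 0 ≤ ν)
    (ℓ : (Fin n → ℝ) → EReal)
    (hℓ : ∀ c, ℓ c =
      (⨆ x : X, ((ν * d x xstar - ∑ i, c i * (x : Fin n → ℝ) i : ℝ) : EReal)) +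
        ((∑ i, c i * xstar i : ℝ) : EReal)) :
    (∀ c₁ c₂ : Fin n → ℝ, ∀ t : ℝ, 0 ≤ t → t ≤ 1 →
      ℓ (t • c₁ + (1 - t) • c₂) ≤ (t : EReal) * ℓ c₁ + ((1 - t : ℝ) : EReal) * ℓ c₂) ∧
    (∀ c, 0 ≤ ℓ c) ∧
    (∀ c, 0 < ν → ℓ c = 0 →
      ∀ x ∈ X, x ≠ xstar → ∑ i, c i * xstar i < ∑ i, c i * x i) :=
  stmt_13_general n X xstar hxstar d hd_nonneg hd_eq ν ℓ hℓ
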